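/- Let G be a group with finite generating set X and word metric d_G, let π : G → Q be a surjective homomorphism, and give Q the word metric d_Q of the finite generating set π(X). Suppose there exists a map t : Q → G with π∘t = id_Q which is coarsely Lipschitz, i.e. for every R ≥ 0 there exists S ≥ 0 such that d_Q(q,q') ≤ R implies d_G(t(q),t(q')) ≤ S. Let χ : Q → ℝ be a nonzero character. If χ∘π ∈ Σ^m(G;ℤ) then χ ∈ Σ^m(Q;ℤ). -/

import Mathlib

open Finsupp

variable {G : Type*} [Group G]

/-- Word length with respect to a generating set `X`. -/
noncomputable def wordLength (X : Finset G) (g : G) : ℕ :=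
  sInf {n : ℕ | ∃ w : List G, w.length = n ∧ (∀ x ∈ w, x ∈ X ∨ x⁻¹ ∈ X) ∧ w.prod = g}

/-- The left-invariant word metric `d(g,h) = l(g⁻¹h)`. -/
noncomputable def wordDist (X : Finset G) (g h : G) : ℕ :=
  wordLength X (g⁻¹ * h)

/-- `c` is a chain in `C_q^k(S)`: its support consists of `(q+1)`-tuples of elements of `S`
that are pairwise at distance at most `k`. -/
def VRChain (X : Finset G) (S : Set G) (q k : ℕ) (c : (Fin (q + 1) → G) →₀ ℤ) : Prop :=
  ∀ σ ∈ c.support, (∀ i, σ i ∈ S) ∧ ∀ i j, wordDist X (σ i) (σ j) ≤ k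

/-- The simplicial boundary map `∂_{q+1} : ℤ[G^{q+2}] → ℤ[G^{q+1}]`. -/
noncomputable def bnd (q : ℕ) :
    ((Fin (q + 2) → G) →₀ ℤ) →ₗ[ℤ] ((Fin (q + 1) → G) →₀ ℤ) :=
  Finsupp.lift _ ℤ _
    (fun σ => ∑ i : Fin (q + 2), ((-1 : ℤ) ^ (i : ℕ)) • Finsupp.single (σ ∘ i.succAbove) (1 : ℤ))

/-- The augmentation `ε : ℤ[G] → ℤ` sending every vertex to `1`. -/
noncomputable def aug : ((Fin 1 → G) →₀ ℤ) →ₗ[ℤ] ℤ :=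
  Finsupp.lift ℤ ℤ (Fin 1 → G) (fun _ => (1 : ℤ))

/-- Reduced `q`-cycles at scale `k` on `S` bound at scale `l` on `S`. -/
def BoundsAt (X : Finset G) (S : Set G) : ℕ → ℕ → ℕ → Prop
  | 0, k, l => ∀ z : (Fin 1 → G) →₀ ℤ, VRChain X S 0 k z → aug z = 0 →
      ∃ c : (Fin 2 → G) →₀ ℤ, VRChain X S 1 l c ∧ bnd 0 c = z
  | (q + 1), k, l => ∀ z : (Fin (q + 2) → G) →₀ ℤ, VRChain X S (q + 1) k z → bnd q z = 0 →
      ∃ c : (Fin (q + 3) → G) →₀ ℤ, VRChain X S (q + 2) l c ∧ bnd (q + 1) c = z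

/-- `S ⊆ G` is of type `FP_m`. -/
def TypeFP (X : Finset G) (S : Set G) (m : ℕ) : Prop :=
  ∀ q < m, ∀ k : ℕ, ∃ l ≥ k, BoundsAt X S q k l

/-- A character on `G` is a homomorphism to the additive reals. -/
def IsCharacter (χ : G → ℝ) : Prop :=
  ∀ g h : G, χ (g * h) = χ g + χ h

/-- Simultaneous left translation on chains, making `ℤ[G^{q+1}]` a `ℤG`-module. -/
noncomputable def lTranslate (g : G) (q : ℕ) :
    ((Fin (q + 1) → G) →₀ ℤ) →ₗ[ℤ] ((Fin (q + 1) → G) →₀ ℤ) :=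
  Finsupp.lmapDomain ℤ ℤ (fun σ i => g * σ i)

/-- A chain endomorphism of `ℤG`-complexes on `(C_q^k(G))_{q=0,…,m}` extending the identity
on `ℤ`: each `φ q` maps scale-`k` chains to scale-`k` chains, is `G`-equivariant,
satisfies `ε ∘ φ₀ = ε` and commutes with the boundary maps. -/
def IsChainEndo (X : Finset G) (k m : ℕ)
    (φ : ∀ q : ℕ, ((Fin (q + 1) → G) →₀ ℤ) →ₗ[ℤ] ((Fin (q + 1) → G) →₀ ℤ)) : Prop :=
  (∀ q ≤ m, ∀ c, VRChain X Set.univ q k c → VRChain X Set.univ q k (φ q c)) ∧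
  (∀ q ≤ m, ∀ (g : G) (c), VRChain X Set.univ q k c →
    φ q (lTranslate g q c) = lTranslate g q (φ q c)) ∧
  (∀ c : (Fin 1 → G) →₀ ℤ, VRChain X Set.univ 0 k c → aug (φ 0 c) = aug c) ∧
  (∀ q : ℕ, q + 1 ≤ m → ∀ c : (Fin (q + 2) → G) →₀ ℤ, VRChain X Set.univ (q + 1) k c →
    bnd q (φ (q + 1) c) = φ q (bnd q c))

/-- The valuation of a simplex: `v(σ) = min_i χ(g_i)` (with values in `EReal`). -/
noncomputable def vsimp (χ : G → ℝ) {q : ℕ} (σ : Fin (q + 1) → G) : EReal :=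
  ⨅ i, (χ (σ i) : EReal)

/-- The valuation of a chain: the minimum of the valuations of the simplices in its support
(`⊤` for the zero chain). -/
noncomputable def vchain (χ : G → ℝ) {q : ℕ} (c : (Fin (q + 1) → G) →₀ ℤ) : EReal :=
  ⨅ σ ∈ c.support, vsimp χ σ

/-!
Push a cycle on `Q_χ` into `G_{χ∘π}` along the transversal `t`: since `χ (π (t q)) = χ q` and
`t` is coarsely Lipschitz, this is a cycle on `G_{χ∘π}` at a controlled scale, so it bounds there.
Pushing the filling back along `π`, which does not increase word distances, and using
`π ∘ t = id`, gives a filling of the original cycle on `Q_χ` at the same scale.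
-/

section WordMetric

variable {Q : Type*} [Group Q] [DecidableEq Q] {X : Finset G}

lemma wordLength_map_le (π : G →* Q) {g : G} (hg : g ∈ Subgroup.closure (X : Set G)) :
    wordLength (X.image π) (π g) ≤ wordLength X g := by
  rw [← Subgroup.mem_toSubmonoid, Subgroup.closure_toSubmonoid] at hg
  obtain ⟨w, hwX, hw⟩ := Submonoid.exists_list_of_mem_closure hg
  obtain ⟨v, hv, hvX, hvg⟩ := Nat.sInf_mem (s := {n : ℕ | ∃ w : List G, w.length = n ∧
    (∀ x ∈ w, x ∈ X ∨ x⁻¹ ∈ X) ∧ w.prod = g}) ⟨w.length, w, rfl, hwX, hw⟩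
  refine Nat.sInf_le ⟨v.map π, by rw [List.length_map, hv, wordLength], ?_, by
    rw [← map_list_prod, hvg]⟩
  simp only [List.mem_map, forall_exists_index, and_imp, forall_apply_eq_imp_iff₂, ← map_inv]
  exact fun x hx => (hvX x hx).imp (Finset.mem_image_of_mem π) (Finset.mem_image_of_mem π)

lemma wordDist_map_le (hX : Subgroup.closure (X : Set G) = ⊤) (π : G →* Q) (g h : G) :
    wordDist (X.image π) (π g) (π h) ≤ wordDist X g h := by
  rw [wordDist, wordDist, ← map_inv, ← map_mul]
  exact wordLength_map_le π (hX ▸ Subgroup.mem_top _)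

end WordMetric

section MapChain

variable {α β : Type*} {q : ℕ}

noncomputable def mapChain (f : α → β) (q : ℕ) :
    ((Fin (q + 1) → α) →₀ ℤ) →ₗ[ℤ] ((Fin (q + 1) → β) →₀ ℤ) :=
  Finsupp.lmapDomain ℤ ℤ (f ∘ ·)

@[simp]
lemma mapChain_single (f : α → β) (σ : Fin (q + 1) → α) (b : ℤ) :
    mapChain f q (Finsupp.single σ b) = Finsupp.single (f ∘ σ) b :=
  Finsupp.mapDomain_single

lemma mapChain_mapChain_of_leftInverse {p : β → α} {s : α → β} (hps : Function.LeftInverse p s)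
    (c : (Fin (q + 1) → α) →₀ ℤ) : mapChain p q (mapChain s q c) = c := by
  simp only [mapChain, Finsupp.lmapDomain_apply, ← Finsupp.mapDomain_comp]
  convert Finsupp.mapDomain_id
  ext σ i
  exact hps (σ i)

lemma exists_eq_comp_of_mem_support_mapChain (f : α → β) {c : (Fin (q + 1) → α) →₀ ℤ}
    {τ : Fin (q + 1) → β} (hτ : τ ∈ (mapChain f q c).support) : ∃ σ ∈ c.support, f ∘ σ = τ := by
  classical
  exact Finset.mem_image.mp (Finsupp.mapDomain_support hτ)

lemma bnd_single (σ : Fin (q + 2) → α) (b : ℤ) :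
    bnd q (Finsupp.single σ b) =
      b • ∑ i : Fin (q + 2), ((-1 : ℤ) ^ (i : ℕ)) • Finsupp.single (σ ∘ i.succAbove) (1 : ℤ) := by
  simp [bnd]

lemma bnd_mapChain (f : α → β) (c : (Fin (q + 2) → α) →₀ ℤ) :
    bnd q (mapChain f (q + 1) c) = mapChain f q (bnd q c) := by
  induction c using Finsupp.induction_linear with
  | zero => simp
  | add c c' hc hc' => simp only [map_add, hc, hc']
  | single σ b => simp [bnd_single, Function.comp_assoc]

lemma aug_mapChain (f : α → β) (c : (Fin 1 → α) →₀ ℤ) : aug (mapChain f 0 c) = aug c := by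
  induction c using Finsupp.induction_linear with
  | zero => simp
  | add c c' hc hc' => simp only [map_add, hc, hc']
  | single σ b => simp [aug]

end MapChain

section CoarseRetraction

variable {Q : Type*} [Group Q] {X : Finset G} {Y : Finset Q} {S : Set G} {T : Set Q}

lemma VRChain.mapChain {q k l : ℕ} {f : G → Q} (hST : Set.MapsTo f S T)
    (hf : ∀ g h, wordDist X g h ≤ k → wordDist Y (f g) (f h) ≤ l)
    {c : (Fin (q + 1) → G) →₀ ℤ} (hc : VRChain X S q k c) :
    VRChain Y T q l (mapChain f q c) := by
  intro τ hτ
  obtain ⟨σ, hσ, rfl⟩ := exists_eq_comp_of_mem_support_mapChain f hτ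
  exact ⟨fun i => hST ((hc σ hσ).1 i), fun i j => hf _ _ ((hc σ hσ).2 i j)⟩

lemma BoundsAt.of_leftInverse {q k k' l : ℕ} {p : G → Q} {s : Q → G}
    (hps : Function.LeftInverse p s) (hsTS : Set.MapsTo s T S)
    (hs : ∀ x y, wordDist Y x y ≤ k → wordDist X (s x) (s y) ≤ k') (hpST : Set.MapsTo p S T)
    (hp : ∀ g h, wordDist X g h ≤ l → wordDist Y (p g) (p h) ≤ l) (h : BoundsAt X S q k' l) :
    BoundsAt Y T q k l := by
  cases q with
  | zero =>
    intro z hz hz₀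
    obtain ⟨c, hc, hcz⟩ := h (mapChain s 0 z) (hz.mapChain hsTS hs) (by rwa [aug_mapChain])
    exact ⟨mapChain p 1 c, hc.mapChain hpST hp,
      by rw [bnd_mapChain, hcz, mapChain_mapChain_of_leftInverse hps]⟩
  | succ q =>
    intro z hz hz₀
    obtain ⟨c, hc, hcz⟩ :=
      h (mapChain s (q + 1) z) (hz.mapChain hsTS hs) (by rw [bnd_mapChain, hz₀, map_zero])
    exact ⟨mapChain p (q + 2) c, hc.mapChain hpST hp,
      by rw [bnd_mapChain, hcz, mapChain_mapChain_of_leftInverse hps]⟩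

end CoarseRetraction

theorem stmt8_general {G Q : Type*} [Group G] [Group Q] [DecidableEq Q]
    (X : Finset G) (hX : Subgroup.closure (X : Set G) = ⊤)
    (π : G →* Q)
    (t : Q → G) (ht : ∀ q, π (t q) = q)
    (hlip : ∀ R : ℕ, ∃ S : ℕ, ∀ q q' : Q,
      wordDist (X.image (fun g => π g)) q q' ≤ R → wordDist X (t q) (t q') ≤ S)
    (m : ℕ) (χ : Q → ℝ)
    (h : TypeFP X {g : G | 0 ≤ χ (π g)} m) :
    TypeFP (X.image (fun g => π g)) {q : Q | 0 ≤ χ q} m := by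
  intro q hq k
  obtain ⟨S, hS⟩ := hlip k
  obtain ⟨l, hl, hb⟩ := h q hq (max S k)
  refine ⟨l, (le_max_right S k).trans hl, hb.of_leftInverse ht ?_ ?_ (fun _ hg => hg) ?_⟩
  · intro x (hx : 0 ≤ χ x)
    show 0 ≤ χ (π (t x))
    rwa [ht]
  · exact fun x y hxy => (hS x y hxy).trans (le_max_left S k)
  · exact fun g g' hgg' => (wordDist_map_le hX π g g').trans hgg'

/-- If `π : G → Q` admits a coarsely Lipschitz transversal and `χ∘π ∈ Σ^m(G;ℤ)`, then
`χ ∈ Σ^m(Q;ℤ)`. -/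
theorem stmt8 {G Q : Type*} [Group G] [Group Q] [DecidableEq Q]
    (X : Finset G) (hX : Subgroup.closure (X : Set G) = ⊤)
    (π : G →* Q) (hsurj : Function.Surjective π)
    (t : Q → G) (ht : ∀ q, π (t q) = q)
    (hlip : ∀ R : ℕ, ∃ S : ℕ, ∀ q q' : Q,
      wordDist (X.image (fun g => π g)) q q' ≤ R → wordDist X (t q) (t q') ≤ S)
    (m : ℕ) (χ : Q → ℝ) (hχ : IsCharacter χ) (hne : ∃ q, χ q ≠ 0)
    (h : TypeFP X {g : G | 0 ≤ χ (π g)} m) :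
    TypeFP (X.image (fun g => π g)) {q : Q | 0 ≤ χ q} m :=
  stmt8_general X hX π t ht hlip m χ h
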